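/- arXiv:1111.3705 — 2 statements merged into one kernel-verified Lean document; each statement's English description precedes it below -/
import Mathlib

section
/- Let ρ: G → GL_d(ℂ) be a representation with character χ_ρ. Let T(q) be the (n+1)×(n+1) matrix over ℂ[[q]] with entries T(q)^i_j = Σ_{m≥0} q^m · ⟨(χ_ρ)^m·χ_i, χ_j⟩ (the Clebsch–Gordan series of the tensor powers of ρ). Then for any 1 ≤ k ≤ n+1 and strictly increasing tuples 0 ≤ i_1 < … < i_k ≤ n, 0 ≤ j_1 < … < j_k ≤ n, the corresponding k×k minor of T(q) equals, in ℂ[[q]], (1/|G|^k) · Σ_{0 ≤ p_1 < … < p_k ≤ n} det(χ_{i_a}(g_{p_b})) · conj( det(χ_{j_a}(g_{p_b})) ) · Π_{m=1}^k |C_{p_m}|·(1 − q·χ_ρ(g_{p_m}))^{-1}. -/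
/-!
Grouping the sum over `G` in `⟨χ_ρ^m χ_i, χ_j⟩` by conjugacy classes and summing the geometric
series in `q` factors the Clebsch–Gordan matrix as `T = X · diag(w) · Xᴴ`, where `X = (χ_i(g_p))`
is the character table and `w_p = |C_p| / |G| · (1 - q χ_ρ(g_p))⁻¹`. The minors of `T` then come
from the Cauchy–Binet formula, whose proof rests on writing an injective tuple `Fin k → ι` uniquely
as a strictly monotone tuple composed with a permutation.
-/

open CategoryTheory
open scoped Classical

/-- Inner product of class functions: `⟨a, b⟩ = (1/|G|) Σ_{g∈G} a(g)·conj(b(g))`. -/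
noncomputable def cgIP {G : Type*} [Group G] [Fintype G] (a b : G → ℂ) : ℂ :=
  (Fintype.card G : ℂ)⁻¹ * ∑ x : G, a x * (starRingEnd ℂ) (b x)

/-- The size of the conjugacy class of `x`. -/
noncomputable def classCard {G : Type*} [Group G] (x : G) : ℕ :=
  Nat.card {y : G // IsConj x y}

open Finset Equiv

theorem StrictMono.sort_comp_perm {ι : Type*} [LinearOrder ι] {k : ℕ} {P : Fin k → ι}
    (hP : StrictMono P) (τ : Perm (Fin k)) : Tuple.sort (P ∘ τ) = τ⁻¹ := by
  have h : (P ∘ τ) ∘ Tuple.sort (P ∘ τ) = P := by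
    rw [Tuple.comp_perm_comp_sort_eq_comp_sort, Tuple.sort_eq_refl_iff_monotone.mpr hP.monotone]
    rfl
  refine eq_inv_of_mul_eq_one_right ?_
  ext i
  simpa using congrArg Fin.val (hP.injective (congrFun h i))

theorem Finset.sum_injective_eq_sum_strictMono_sum_perm {M ι : Type*} [AddCommMonoid M]
    [Fintype ι] [LinearOrder ι] {k : ℕ} (f : (Fin k → ι) → M) :
    ∑ p with Function.Injective p, f p =
      ∑ P with StrictMono P, ∑ τ : Perm (Fin k), f (P ∘ τ) := by
  rw [← sum_product']
  symm
  refine sum_nbij' (fun x => x.1 ∘ x.2) (fun p => (p ∘ Tuple.sort p, (Tuple.sort p)⁻¹))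
    ?_ ?_ ?_ ?_ fun _ _ => rfl
  · simp only [mem_product, mem_filter, mem_univ, true_and, and_true]
    exact fun x hx => hx.injective.comp x.2.injective
  · simp only [mem_product, mem_filter, mem_univ, true_and, and_true]
    exact fun p hp =>
      (Tuple.monotone_sort p).strictMono_of_injective (hp.comp (Equiv.injective _))
  · simp only [mem_product, mem_filter, mem_univ, true_and, and_true]
    rintro ⟨P, τ⟩ hP
    simp [hP.sort_comp_perm, Function.comp_assoc]
  · intro p _
    simp [Function.comp_assoc]

namespace Matrix

variable {R ι : Type*} [CommRing R] {k : ℕ}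

theorem det_submatrix_eq_zero_of_not_injective (A : Matrix (Fin k) ι R) {p : Fin k → ι}
    (hp : ¬ Function.Injective p) : det (A.submatrix id p) = 0 := by
  obtain ⟨i, j, hij, hne⟩ : ∃ i j, p i = p j ∧ i ≠ j := by
    simpa [Function.Injective] using hp
  exact det_zero_of_column_eq hne fun r => by simp [hij]

theorem det_mul_eq_sum_prod_mul_det_submatrix [Fintype ι] (A : Matrix (Fin k) ι R)
    (B : Matrix ι (Fin k) R) :
    det (A * B) = ∑ p : Fin k → ι, (∏ i, B (p i) i) * det (A.submatrix id p) := by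
  simp only [det_apply', mul_apply, prod_univ_sum, mul_sum, Fintype.piFinset_univ,
    submatrix_apply, id, prod_mul_distrib]
  rw [Finset.sum_comm]
  exact sum_congr rfl fun p _ => sum_congr rfl fun σ _ => by ring

theorem det_mul_eq_sum_strictMono [Fintype ι] [LinearOrder ι] (A : Matrix (Fin k) ι R)
    (B : Matrix ι (Fin k) R) :
    det (A * B) = ∑ P with StrictMono P, det (A.submatrix id P) * det (B.submatrix P id) := by
  rw [det_mul_eq_sum_prod_mul_det_submatrix,
    ← sum_filter_of_ne (p := Function.Injective) fun p _ hp => ?_,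
    sum_injective_eq_sum_strictMono_sum_perm]
  · refine sum_congr rfl fun P _ => ?_
    have hperm (τ : Perm (Fin k)) :
        det (A.submatrix id (P ∘ τ)) = Perm.sign τ * det (A.submatrix id P) :=
      det_permute' τ (A.submatrix id P)
    simp_rw [hperm, det_apply' (B.submatrix P id), mul_sum]
    exact sum_congr rfl fun τ _ => by simp only [submatrix_apply, id, Function.comp]; ring
  · by_contra hinj
    exact hp (by rw [det_submatrix_eq_zero_of_not_injective A hinj, mul_zero])

theorem det_submatrix_mul_diagonal_mul [Fintype ι] [LinearOrder ι] {m m' : Type*}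
    (A : Matrix m ι R) (w : ι → R) (B : Matrix ι m' R) (I : Fin k → m) (J : Fin k → m') :
    det ((A * diagonal w * B).submatrix I J) =
      ∑ P with StrictMono P,
        det (A.submatrix I P) * (∏ i, w (P i)) * det (B.submatrix P J) := by
  rw [Matrix.mul_assoc, submatrix_mul _ _ _ id _ Function.bijective_id, det_mul_eq_sum_strictMono]
  refine sum_congr rfl fun P _ => ?_
  have hdiag : ((diagonal w * B).submatrix id J).submatrix P id =
      diagonal (w ∘ P) * B.submatrix P J := by
    ext a b
    simp [diagonal_mul]
  rw [submatrix_submatrix, hdiag, det_mul, det_diagonal, ← mul_assoc]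
  rfl

end Matrix

theorem PowerSeries.inv_one_sub_X_mul_C {K : Type*} [Field K] (c : K) :
    (1 - X * C c)⁻¹ = mk (c ^ ·) := by
  rw [eq_comm, eq_inv_iff_mul_eq_one (by simp)]
  simpa [rescale_mk, rescale_X, mul_comm X] using
    congrArg (rescale c) (mk_one_mul_one_sub_eq_one (S := K))

section ClassFunctions

variable {G : Type*} [Group G] [Fintype G] {ι : Type*} [Fintype ι]

theorem sum_eq_sum_classCard_smul {M : Type*} [AddCommMonoid M] (g : ι → G)
    (hg : ∀ x : G, ∃! p, IsConj (g p) x) {f : G → M} (hf : ∀ x y, IsConj x y → f x = f y) :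
    ∑ x, f x = ∑ p, classCard (g p) • f (g p) := by
  choose c hc hcu using hg
  rw [← sum_fiberwise univ c f]
  refine sum_congr rfl fun p _ => ?_
  have hfiber (x : G) : c x = p ↔ IsConj (g p) x :=
    ⟨fun h => h ▸ hc x, fun h => (hcu x p h).symm⟩
  rw [filter_congr fun x _ => hfiber x,
    sum_congr rfl fun x hx => (hf _ x (mem_filter.1 hx).2).symm, sum_const, classCard,
    Nat.card_eq_fintype_card, Fintype.card_subtype]

theorem cgIP_eq_sum_classCard (g : ι → G) (hg : ∀ x : G, ∃! p, IsConj (g p) x)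
    {a b : G → ℂ} (ha : ∀ x y, IsConj x y → a x = a y) (hb : ∀ x y, IsConj x y → b x = b y) :
    cgIP a b = (Fintype.card G : ℂ)⁻¹ *
      ∑ p, (classCard (g p) : ℂ) * (a (g p) * starRingEnd ℂ (b (g p))) := by
  rw [cgIP, sum_eq_sum_classCard_smul g hg fun x y h => by rw [ha x y h, hb x y h]]
  simp only [nsmul_eq_mul]

open PowerSeries in
theorem mk_cgIP_pow_mul_eq_sum (g : ι → G) (hg : ∀ x : G, ∃! p, IsConj (g p) x)
    {a b c : G → ℂ} (ha : ∀ x y, IsConj x y → a x = a y) (hb : ∀ x y, IsConj x y → b x = b y)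
    (hc : ∀ x y, IsConj x y → c x = c y) :
    mk (fun m => cgIP (fun s => c s ^ m * a s) b) =
      ∑ p, C (a (g p)) * (C (Fintype.card G : ℂ)⁻¹ *
        ((classCard (g p) : PowerSeries ℂ) * (1 - X * C (c (g p)))⁻¹)) * C (star (b (g p))) := by
  ext m
  rw [coeff_mk, cgIP_eq_sum_classCard g hg
    (fun x y h => by rw [hc x y h, ha x y h]) hb, mul_sum, map_sum]
  refine sum_congr rfl fun p _ => ?_
  rw [inv_one_sub_X_mul_C, ← map_natCast (C (R := ℂ)), coeff_mul_C, coeff_C_mul, coeff_C_mul,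
    coeff_C_mul, coeff_mk, starRingEnd_apply]
  ring

end ClassFunctions

theorem FDRep.character_eq_of_isConj {k G : Type*} [Field k] [Group G] (V : FDRep k G)
    {x y : G} (h : IsConj x y) : V.character x = V.character y := by
  obtain ⟨c, rfl⟩ := isConj_iff.mp h
  exact (V.char_conj x c).symm

theorem MonoidHom.trace_apply_eq_of_isConj {G R n : Type*} [Group G] [CommRing R] [Fintype n]
    [DecidableEq n] (ρ : G →* Matrix.GeneralLinearGroup n R) {x y : G} (h : IsConj x y) :
    Matrix.trace (ρ x : Matrix n n R) = Matrix.trace (ρ y : Matrix n n R) := by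
  obtain ⟨c, rfl⟩ := isConj_iff.mp h
  simp only [map_mul, map_inv, Units.val_mul, Matrix.trace_units_conj]

theorem stmt4_general {G : Type} [Group G] [Fintype G] {n : ℕ}
    (g : Fin (n + 1) → G)
    (hg : ∀ x : G, ∃! k : Fin (n + 1), IsConj (g k) x)
    (R : Fin (n + 1) → FDRep ℂ G)
    {d : ℕ} (ρ : G →* Matrix.GeneralLinearGroup (Fin d) ℂ)
    -- `χρ` : the character of `ρ`
    (χρ : G → ℂ) (hχρ : ∀ s, χρ s = Matrix.trace (ρ s : Matrix (Fin d) (Fin d) ℂ))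
    -- `T` : the graded Clebsch–Gordan matrix of the tensor algebra of `ρ`
    (T : Matrix (Fin (n + 1)) (Fin (n + 1)) (PowerSeries ℂ))
    (hT : ∀ i j, T i j =
      PowerSeries.mk fun m => cgIP (fun s => χρ s ^ m * (R i).character s) ((R j).character))
    (k : ℕ)
    (I J : Fin k → Fin (n + 1)) :
    (T.submatrix I J).det =
      PowerSeries.C ((Fintype.card G : ℂ)⁻¹ ^ k) *
        ∑ P ∈ Finset.univ.filter (fun P : Fin k → Fin (n + 1) => StrictMono P),
          PowerSeries.C (Matrix.of fun a b : Fin k => (R (I a)).character (g (P b))).det *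
            PowerSeries.C ((starRingEnd ℂ)
              (Matrix.of fun a b : Fin k => (R (J a)).character (g (P b))).det) *
            ∏ m : Fin k, ((classCard (g (P m)) : PowerSeries ℂ) *
              ((1 : PowerSeries ℂ) - PowerSeries.X * PowerSeries.C (χρ (g (P m))))⁻¹) := by
  open PowerSeries Matrix in
  let χ : Matrix (Fin (n + 1)) (Fin (n + 1)) ℂ := of fun i p => (R i).character (g p)
  let w (p : Fin (n + 1)) : PowerSeries ℂ :=
    C (Fintype.card G : ℂ)⁻¹ *
      ((classCard (g p) : PowerSeries ℂ) * (1 - X * C (χρ (g p)))⁻¹)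
  have hχρ_conj (x y : G) (h : IsConj x y) : χρ x = χρ y := by
    rw [hχρ, hχρ, ρ.trace_apply_eq_of_isConj h]
  have hfactor : T = χ.map C * diagonal w * χᴴ.map C := by
    ext1 i j
    rw [hT, mk_cgIP_pow_mul_eq_sum g hg (fun _ _ => (R i).character_eq_of_isConj)
      (fun _ _ => (R j).character_eq_of_isConj) hχρ_conj, mul_apply]
    simp only [mul_diagonal, map_apply, conjTranspose_apply]
    rfl
  rw [hfactor, det_submatrix_mul_diagonal_mul, mul_sum]
  refine sum_congr rfl fun P _ => ?_
  have hdet_map (M : Matrix (Fin k) (Fin k) ℂ) : (M.map C).det = C M.det := by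
    rw [RingHom.map_det]
    rfl
  have hχ_submatrix (K : Fin k → Fin (n + 1)) :
      χ.submatrix K P = of fun a b => (R (K a)).character (g (P b)) := rfl
  rw [submatrix_map, hdet_map, submatrix_map, hdet_map, ← conjTranspose_submatrix,
    det_conjTranspose, hχ_submatrix, hχ_submatrix]
  simp only [w, prod_mul_distrib, prod_const, card_univ, Fintype.card_fin, map_pow,
    starRingEnd_apply]
  ring

theorem stmt4 {G : Type} [Group G] [Fintype G] {n : ℕ}
    (g : Fin (n + 1) → G) (hg1 : g 0 = 1)
    (hg : ∀ x : G, ∃! k : Fin (n + 1), IsConj (g k) x)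
    (R : Fin (n + 1) → FDRep ℂ G)
    (hsimple : ∀ i, Simple (R i))
    (htriv : ∀ x : G, (R 0).character x = 1)
    (hdist : ∀ i j, i ≠ j → ¬ Nonempty (R i ≅ R j))
    {d : ℕ} (ρ : G →* Matrix.GeneralLinearGroup (Fin d) ℂ)
    -- `χρ` : the character of `ρ`
    (χρ : G → ℂ) (hχρ : ∀ s, χρ s = Matrix.trace (ρ s : Matrix (Fin d) (Fin d) ℂ))
    -- `T` : the graded Clebsch–Gordan matrix of the tensor algebra of `ρ`
    (T : Matrix (Fin (n + 1)) (Fin (n + 1)) (PowerSeries ℂ))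
    (hT : ∀ i j, T i j =
      PowerSeries.mk fun m => cgIP (fun s => χρ s ^ m * (R i).character s) ((R j).character))
    (k : ℕ) (hk1 : 1 ≤ k) (hk2 : k ≤ n + 1)
    (I J : Fin k → Fin (n + 1)) (hI : StrictMono I) (hJ : StrictMono J) :
    (T.submatrix I J).det =
      PowerSeries.C ((Fintype.card G : ℂ)⁻¹ ^ k) *
        ∑ P ∈ Finset.univ.filter (fun P : Fin k → Fin (n + 1) => StrictMono P),
          PowerSeries.C (Matrix.of fun a b : Fin k => (R (I a)).character (g (P b))).det *
            PowerSeries.C ((starRingEnd ℂ)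
              (Matrix.of fun a b : Fin k => (R (J a)).character (g (P b))).det) *
            ∏ m : Fin k, ((classCard (g (P m)) : PowerSeries ℂ) *
              ((1 : PowerSeries ℂ) - PowerSeries.X * PowerSeries.C (χρ (g (P m))))⁻¹) :=
  stmt4_general g hg R ρ χρ hχρ T hT k I J
end

section
/- Let ρ: G → GL_d(ℂ) be a representation with d ≥ 1 and let S(q) be the (n+1)×(n+1) Molien matrix over ℂ(q) with entries S(q)^i_j = (1/|G|) Σ_{k=0}^n |C_k|·χ_i(g_k)·conj(χ_j(g_k)) / det(1 − q·ρ(g_k)). Let n_1, …, n_d be positive integers and suppose that every entry of the matrix D(q) := (Π_{t=1}^d (1 − q^{n_t})) · S(q) is a polynomial in ℂ[q]. Let B be the (n+1)×(n+1) complex matrix with entries B^i_j = (1/|G|) Σ_{k=0}^n |C_k|·χ_i(g_k)·conj(χ_j(g_k))·det(1 − ρ(g_k)). Then for every 0 ≤ i ≤ d−1, the matrix D^{(i)}(1)·B^{i+1} is zero, where D^{(i)}(1) denotes the entrywise i-th derivative of D(q) evaluated at q = 1 and B^{i+1} is the (i+1)-st matrix power of B. -/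
open CategoryTheory
open scoped Classical

/-- `det(1 − q·ρ(g))` as an element of the field `ℂ(q)` of rational functions. -/
noncomputable def molienDetRat {G : Type} [Group G] {d : ℕ}
    (ρ : G →* Matrix.GeneralLinearGroup (Fin d) ℂ) (s : G) : RatFunc ℂ :=
  Matrix.det ((1 : Matrix (Fin d) (Fin d) (RatFunc ℂ)) -
    ((ρ s : Matrix (Fin d) (Fin d) ℂ)).map fun a => RatFunc.X * RatFunc.C a)

/-!
By the orthogonality relations, the character table `X` diagonalises both `S` and `B`:
`S = X · diag (1 / det (1 - q ρ(g_k))) · X⁻¹` and `B = X · diag (det (1 - ρ(g_k))) · X⁻¹`.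
Hence `D · B^{i+1}` is `∏_t (1 - q^{n_t})` times
`X · diag (det (1 - ρ(g_k))^{i+1} / det (1 - q ρ(g_k))) · X⁻¹`.
Every diagonal entry is regular at `q = 1`: either `det (1 - ρ(g_k)) = 0` and the entry vanishes,
or this is the value of the denominator at `q = 1`. Since `(1 - q)^d` divides the prefactor, every
entry of the polynomial matrix `D · B^{i+1}` is divisible by `(q - 1)^{i+1}` for `i < d`, so its
`i`-th derivative vanishes at `q = 1`.
-/

open Polynomial Module

lemma Module.End.trace_eq_finsum_mul_finrank_eigenspace {K V : Type*} [Field K] [AddCommGroup V]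
    [Module K V] [FiniteDimensional K V] {f h : End K V} (hf : ⨆ μ, f.eigenspace μ = ⊤)
    (c : K → K) (hc : ∀ μ, ∀ x ∈ f.eigenspace μ, h x = c μ • x) :
    LinearMap.trace K V h = ∑ᶠ μ, c μ * finrank K (f.eigenspace μ) := by
  classical
  have hds := DirectSum.isInternal_submodule_of_iSupIndep_of_iSup_eq_top
    f.eigenspaces_iSupIndep hf
  have hfin : {μ | f.eigenspace μ ≠ ⊥}.Finite :=
    WellFoundedGT.finite_ne_bot_of_iSupIndep f.eigenspaces_iSupIndep
  have hmaps : ∀ μ, Set.MapsTo h (f.eigenspace μ) (f.eigenspace μ) := fun μ x hx => by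
    simpa [hc μ x hx] using Submodule.smul_mem _ (c μ) hx
  have hrestrict : ∀ μ, h.restrict (hmaps μ) = c μ • LinearMap.id := fun μ => by
    ext x; exact hc μ x x.2
  rw [LinearMap.trace_eq_sum_trace_restrict' hds hfin hmaps,
    finsum_eq_sum_of_support_subset (s := hfin.toFinset)]
  · simp [hrestrict]
  · intro μ hμ
    rw [Set.Finite.coe_toFinset]
    rintro (h0 : f.eigenspace μ = ⊥)
    exact hμ (by dsimp only; rw [h0, finrank_bot, Nat.cast_zero, mul_zero])

/-- An endomorphism of finite order is diagonalizable with eigenvalues on the unit circle, where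
inversion is complex conjugation. -/
lemma Module.End.trace_eq_conj_trace_of_pow_eq_one {V : Type*} [AddCommGroup V] [Module ℂ V]
    [FiniteDimensional ℂ V] {f f' : End ℂ V} {m : ℕ} (hm : m ≠ 0) (hf : f ^ m = 1)
    (hf' : f' * f = 1) :
    LinearMap.trace ℂ V f' = starRingEnd ℂ (LinearMap.trace ℂ V f) := by
  have hss : f.IsSemisimple := by
    refine isSemisimple_of_squarefree_aeval_eq_zero (p := X ^ m - 1) ?_ (by simp [hf])
    exact (separable_X_pow_sub_C 1 (by exact_mod_cast hm) one_ne_zero).squarefree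
  have hf'_apply : ∀ μ, ∀ x ∈ f.eigenspace μ, f' x = μ⁻¹ • x := by
    intro μ x hx
    have hx' : μ • f' x = x := by
      rw [← map_smul, ← mem_eigenspace_iff.mp hx, ← Module.End.mul_apply, hf',
        Module.End.one_apply]
    rcases eq_or_ne μ 0 with rfl | hμ
    · rw [zero_smul] at hx'
      subst hx'
      simp
    · rwa [eq_inv_smul_iff₀ hμ]
  have hinv_eq_conj : ∀ μ, f.HasEigenvalue μ → μ⁻¹ = starRingEnd ℂ μ := by
    intro μ hμ
    obtain ⟨v, hv⟩ := hμ.exists_hasEigenvector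
    have hμm : μ ^ m = 1 := by
      have := hv.pow_apply m
      rw [hf, Module.End.one_apply] at this
      exact smul_left_injective ℂ hv.2 (this.symm.trans (one_smul ℂ v).symm)
    rw [Complex.inv_def, Complex.normSq_eq_norm_sq, Complex.norm_eq_one_of_pow_eq_one hμm hm]
    simp
  have hsupp : Function.HasFiniteSupport fun μ => μ * (finrank ℂ (f.eigenspace μ) : ℂ) := by
    refine f.finite_hasEigenvalue.subset fun μ hμ => hasEigenvalue_iff.mpr fun h0 => ?_
    exact hμ (by dsimp only; rw [h0, finrank_bot, Nat.cast_zero, mul_zero])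
  rw [trace_eq_finsum_mul_finrank_eigenspace hss.iSup_eigenspace_eq_top _ hf'_apply,
    trace_eq_finsum_mul_finrank_eigenspace hss.iSup_eigenspace_eq_top (fun μ => μ)
      fun μ x hx => mem_eigenspace_iff.mp hx,
    map_finsum _ hsupp]
  refine finsum_congr fun μ => ?_
  by_cases hμ : f.HasEigenvalue μ
  · simp [hinv_eq_conj μ hμ]
  · simp [not_not.mp (hasEigenvalue_iff.not.mp hμ)]

lemma FDRep.character_inv {G : Type*} [Group G] [Finite G] (V : FDRep ℂ G) (x : G) :
    V.character x⁻¹ = starRingEnd ℂ (V.character x) :=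
  Module.End.trace_eq_conj_trace_of_pow_eq_one Nat.card_pos.ne'
    (by rw [← map_pow, pow_card_eq_one', map_one]) (by rw [← map_mul, inv_mul_cancel, map_one])

section CharacterTable

variable {G : Type} [Group G] [Fintype G] {ι : Type*} [Fintype ι]

lemma sum_eq_sum_classCard_nsmul {M : Type*} [AddCommMonoid M]
    {g : ι → G} (hg : ∀ x : G, ∃! k, IsConj (g k) x)
    (F : G → M) (hF : ∀ x y : G, IsConj x y → F x = F y) :
    ∑ x, F x = ∑ k, classCard (g k) • F (g k) := by
  choose φ hφ using fun x => (hg x).exists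
  rw [← Finset.sum_fiberwise Finset.univ φ F]
  refine Finset.sum_congr rfl fun k _ => ?_
  have hfiber : Finset.univ.filter (φ · = k) = Finset.univ.filter (IsConj (g k)) := by
    ext x
    simp only [Finset.mem_filter, Finset.mem_univ, true_and]
    exact ⟨fun h => h ▸ hφ x, fun h => (hg x).unique (hφ x) h⟩
  rw [hfiber, Finset.sum_congr rfl fun x hx => (hF _ _ (Finset.mem_filter.mp hx).2).symm,
    Finset.sum_const, classCard, Nat.card_eq_fintype_card, Fintype.card_subtype]

variable (g : ι → G) (R : ι → FDRep ℂ G)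

lemma sum_classCard_mul_character_mul_conj [DecidableEq ι]
    (hg : ∀ x : G, ∃! k, IsConj (g k) x) (hsimple : ∀ i, Simple (R i))
    (hdist : ∀ i j, i ≠ j → ¬ Nonempty (R i ≅ R j)) (i j : ι) :
    (Fintype.card G : ℂ)⁻¹ *
      ∑ k, (classCard (g k) : ℂ) *
        ((R i).character (g k) * starRingEnd ℂ ((R j).character (g k)))
      = if i = j then 1 else 0 := by
  have hclass : ∀ x y : G, IsConj x y → (R i).character x * (R j).character x⁻¹ =
      (R i).character y * (R j).character y⁻¹ := by
    intro x y hxy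
    obtain ⟨c, rfl⟩ := isConj_iff.mp hxy
    rw [show (c * x * c⁻¹)⁻¹ = c * x⁻¹ * c⁻¹ by group, FDRep.char_conj, FDRep.char_conj]
  simp_rw [← FDRep.character_inv, ← nsmul_eq_mul, ← sum_eq_sum_classCard_nsmul hg _ hclass,
    ← Nat.card_eq_fintype_card, FDRep.char_orthonormal]
  by_cases hij : i = j
  · subst hij
    simp [Nonempty.intro (Iso.refl (R i))]
  · simp [hdist i j hij, hij]

noncomputable def charTable : Matrix ι ι ℂ := Matrix.of fun i k => (R i).character (g k)

noncomputable def charTableInv : Matrix ι ι ℂ :=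
  Matrix.of fun k j =>
    (Fintype.card G : ℂ)⁻¹ * classCard (g k) * starRingEnd ℂ ((R j).character (g k))

lemma charTable_mul_charTableInv [DecidableEq ι]
    (hg : ∀ x : G, ∃! k, IsConj (g k) x) (hsimple : ∀ i, Simple (R i))
    (hdist : ∀ i j, i ≠ j → ¬ Nonempty (R i ≅ R j)) :
    charTable g R * charTableInv g R = 1 := by
  ext i j
  rw [Matrix.mul_apply, Matrix.one_apply,
    ← sum_classCard_mul_character_mul_conj g R hg hsimple hdist, Finset.mul_sum]
  refine Finset.sum_congr rfl fun k _ => ?_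
  simp only [charTable, charTableInv, Matrix.of_apply]
  ring

variable {A : Type*} [CommRing A] [Algebra ℂ A] [DecidableEq ι]

/-- The matrix, in the basis of irreducible characters, of multiplication by the class function
taking the value `f k` on the class of `g k`. The Molien matrix and `B` are of this form. -/
noncomputable def classMatrix (f : ι → A) : Matrix ι ι A :=
  (charTable g R).map (algebraMap ℂ A) * Matrix.diagonal f *
    (charTableInv g R).map (algebraMap ℂ A)

lemma classMatrix_apply (f : ι → A) (i j : ι) :
    classMatrix g R f i j = algebraMap ℂ A (Fintype.card G : ℂ)⁻¹ *
      ∑ k, (classCard (g k) : A) * algebraMap ℂ A ((R i).character (g k)) *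
        algebraMap ℂ A (starRingEnd ℂ ((R j).character (g k))) * f k := by
  rw [classMatrix, Matrix.mul_apply, Finset.mul_sum]
  refine Finset.sum_congr rfl fun k _ => ?_
  simp only [Matrix.mul_diagonal, Matrix.map_apply, charTable, charTableInv, Matrix.of_apply,
    map_mul, map_natCast]
  ring

lemma classMatrix_apply_mem {T : Subalgebra ℂ A} {f : ι → A} (hf : ∀ k, f k ∈ T)
    (i j : ι) :
    classMatrix g R f i j ∈ T := by
  rw [classMatrix_apply]
  refine T.mul_mem (T.algebraMap_mem _) (T.sum_mem fun k _ => T.mul_mem ?_ (hf k))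
  exact T.mul_mem (T.mul_mem (Subalgebra.natCast_mem T _) (T.algebraMap_mem _)) (T.algebraMap_mem _)

variable {g R}

lemma classMatrix_mul (h : charTable g R * charTableInv g R = 1) (f f' : ι → A) :
    classMatrix g R f * classMatrix g R f' = classMatrix g R (f * f') := by
  have hinv :
      (charTableInv g R).map (algebraMap ℂ A) * (charTable g R).map (algebraMap ℂ A) = 1 := by
    rw [← Matrix.map_mul, mul_eq_one_comm.mp h, Matrix.map_one _ (map_zero _) (map_one _)]
  simp only [classMatrix, Matrix.mul_assoc]
  rw [← Matrix.mul_assoc _ ((charTable g R).map _), hinv, Matrix.one_mul,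
    ← Matrix.mul_assoc (Matrix.diagonal f), Matrix.diagonal_mul_diagonal']
  rfl

lemma classMatrix_pow (h : charTable g R * charTableInv g R = 1) (f : ι → A) (m : ℕ) :
    classMatrix g R f ^ m = classMatrix g R (f ^ m) := by
  induction m with
  | zero =>
    rw [pow_zero, pow_zero, classMatrix, Pi.one_def, Matrix.diagonal_one, Matrix.mul_one,
      ← Matrix.map_mul, h, Matrix.map_one _ (map_zero _) (map_one _)]
  | succ m ih => rw [pow_succ, ih, classMatrix_mul h, pow_succ]

lemma classMatrix_map_algebraMap {A' : Type*} [CommRing A'] [Algebra ℂ A'] [Algebra A A']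
    [IsScalarTower ℂ A A'] (f : ι → A) :
    (classMatrix g R f).map (algebraMap A A') = classMatrix g R (algebraMap A A' ∘ f) := by
  simp only [classMatrix, Matrix.map_mul, Matrix.map_map, Matrix.diagonal_map (map_zero _),
    ← RingHom.coe_comp, ← IsScalarTower.algebraMap_eq]
  rfl

end CharacterTable

section Regularity

variable {K : Type*} [Field K]

/-- The rational functions without a pole at `a`, i.e. the local ring of the affine line at `a`. -/
def RatFunc.regularAt (a : K) : Subalgebra K (RatFunc K) where
  carrier := {r | ∃ q F : K[X], q.eval a ≠ 0 ∧ r * algebraMap K[X] _ q = algebraMap K[X] _ F}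
  mul_mem' := by
    rintro r r' ⟨q, F, hq, hr⟩ ⟨q', F', hq', hr'⟩
    refine ⟨q * q', F * F', by simp [hq, hq'], ?_⟩
    rw [map_mul, map_mul, ← hr, ← hr']
    ring
  add_mem' := by
    rintro r r' ⟨q, F, hq, hr⟩ ⟨q', F', hq', hr'⟩
    refine ⟨q * q', F * q' + F' * q, by simp [hq, hq'], ?_⟩
    rw [map_add, map_mul, map_mul, map_mul, ← hr, ← hr']
    ring
  algebraMap_mem' c := ⟨1, Polynomial.C c, by simp, by simp [RatFunc.algebraMap_eq_C]⟩

lemma RatFunc.inv_algebraMap_mem_regularAt {a : K} {p : K[X]} (hp : p.eval a ≠ 0) :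
    (algebraMap K[X] (RatFunc K) p)⁻¹ ∈ RatFunc.regularAt a := by
  refine ⟨p, 1, hp, inv_mul_cancel₀ ?_ |>.trans (map_one _).symm⟩
  rw [ne_eq, map_eq_zero_iff _ (IsFractionRing.injective K[X] (RatFunc K))]
  rintro rfl
  exact hp Polynomial.eval_zero

lemma pow_dvd_of_algebraMap_eq_mul_of_mem_regularAt {a : K} {E P : K[X]} {r : RatFunc K}
    (hr : r ∈ RatFunc.regularAt a) (hE : algebraMap K[X] (RatFunc K) E = algebraMap _ _ P * r)
    {N : ℕ} (hP : (X - C a) ^ N ∣ P) : (X - C a) ^ N ∣ E := by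
  obtain ⟨q, F, hq, hrq⟩ := hr
  have hEq : E * q = P * F := IsFractionRing.injective K[X] (RatFunc K) <| by
    rw [map_mul, map_mul, hE, mul_assoc, hrq]
  have hnot : ¬ (X - C a) ∣ q := by rwa [dvd_iff_isRoot]
  exact (prime_X_sub_C a).pow_dvd_of_dvd_mul_right N hnot (hEq ▸ hP.mul_right F)

end Regularity

lemma Polynomial.eval_iterate_derivative_eq_zero_of_pow_dvd {R : Type*} [CommRing R] {a : R}
    {E : R[X]} {i : ℕ} (h : (X - C a) ^ (i + 1) ∣ E) : (derivative^[i] E).eval a = 0 := by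
  have := pow_sub_dvd_iterate_derivative_of_pow_dvd i h
  rwa [Nat.add_sub_cancel_left, pow_one, dvd_iff_isRoot] at this

lemma Matrix.of_eval_iterate_derivative_mul {R : Type*} [CommRing R] {l m n : Type*} [Fintype m]
    (x : R) (i : ℕ) (D : Matrix l m R[X]) (M : Matrix m n R) :
    (Matrix.of fun a b => (derivative^[i] (D a b)).eval x) * M =
      Matrix.of fun a b => (derivative^[i] ((D * M.map C) a b)).eval x := by
  ext a b
  simp only [Matrix.mul_apply, Matrix.of_apply, Matrix.map_apply, iterate_derivative_sum,
    eval_finsetSum]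
  refine Finset.sum_congr rfl fun c _ => ?_
  rw [mul_comm (D a c), iterate_derivative_C_mul, eval_C_mul, mul_comm]

lemma X_sub_C_one_pow_dvd_prod_one_sub_X_pow {R : Type*} [CommRing R] {d : ℕ} (nn : Fin d → ℕ)
    {N : ℕ} (hN : N ≤ d) : (X - C 1 : R[X]) ^ N ∣ ∏ t, (1 - X ^ nn t) := by
  have hconst : (X - C 1 : R[X]) ^ d = ∏ _t : Fin d, (X - C 1) := by simp
  refine (pow_dvd_pow _ hN).trans (hconst ▸ ?_)
  refine Finset.prod_dvd_prod_of_dvd _ _ fun t _ => ?_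
  rw [← neg_sub (X ^ nn t), dvd_neg, map_one]
  simpa using sub_dvd_pow_sub_pow (X : R[X]) 1 (nn t)

lemma Matrix.eval_one_charpolyRev {n : Type*} [Fintype n] [DecidableEq n] {R : Type*} [CommRing R]
    (M : Matrix n n R) : M.charpolyRev.eval 1 = (1 - M).det := by
  rw [Matrix.charpolyRev, ← coe_evalRingHom, RingHom.map_det]
  congr 1
  ext i j
  simp [Matrix.one_apply, apply_ite]

lemma molienDetRat_eq_charpolyRev {G : Type} [Group G] {d : ℕ}
    (ρ : G →* Matrix.GeneralLinearGroup (Fin d) ℂ) (s : G) :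
    molienDetRat ρ s =
      algebraMap ℂ[X] (RatFunc ℂ) (ρ s : Matrix (Fin d) (Fin d) ℂ).charpolyRev := by
  rw [Matrix.charpolyRev, RingHom.map_det, molienDetRat]
  congr 1
  ext i j
  simp [Matrix.one_apply, apply_ite]
  exact mul_comm _ _

lemma inv_molienDetRat_mul_mem_regularAt {G : Type} [Group G] {d : ℕ}
    (ρ : G →* Matrix.GeneralLinearGroup (Fin d) ℂ) (s : G) (i : ℕ) :
    (molienDetRat ρ s)⁻¹ *
        algebraMap ℂ (RatFunc ℂ) ((1 - (ρ s : Matrix (Fin d) (Fin d) ℂ)).det ^ (i + 1)) ∈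
      RatFunc.regularAt 1 := by
  by_cases hδ : (1 - (ρ s : Matrix (Fin d) (Fin d) ℂ)).det = 0
  · simp [hδ]
  · rw [molienDetRat_eq_charpolyRev]
    refine Subalgebra.mul_mem _ (RatFunc.inv_algebraMap_mem_regularAt ?_)
      (Subalgebra.algebraMap_mem _ _)
    rwa [Matrix.eval_one_charpolyRev]

theorem stmt9_general {G : Type} [Group G] [Fintype G] {n : ℕ}
    (g : Fin (n + 1) → G)
    (hg : ∀ x : G, ∃! k : Fin (n + 1), IsConj (g k) x)
    (R : Fin (n + 1) → FDRep ℂ G)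
    (hsimple : ∀ i, Simple (R i))
    (hdist : ∀ i j, i ≠ j → ¬ Nonempty (R i ≅ R j))
    {d : ℕ} (ρ : G →* Matrix.GeneralLinearGroup (Fin d) ℂ)
    -- `S` : the Molien matrix of `ρ` over `ℂ(q)`
    (S : Fin (n + 1) → Fin (n + 1) → RatFunc ℂ)
    (hS : ∀ i j, S i j =
      RatFunc.C ((Fintype.card G : ℂ)⁻¹) *
        ∑ k : Fin (n + 1), (classCard (g k) : RatFunc ℂ) *
          RatFunc.C ((R i).character (g k)) *
          RatFunc.C ((starRingEnd ℂ) ((R j).character (g k))) / molienDetRat ρ (g k))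
    (nn : Fin d → ℕ)
    -- every entry of `D(q) = (Π_t (1 − q^{n_t})) · S(q)` is a polynomial
    (D : Matrix (Fin (n + 1)) (Fin (n + 1)) (Polynomial ℂ))
    (hD : ∀ i j, algebraMap (Polynomial ℂ) (RatFunc ℂ) (D i j) =
      (∏ t : Fin d, ((1 : RatFunc ℂ) - RatFunc.X ^ nn t)) * S i j)
    -- `B` : the affine Cartan-type matrix, the value at `q = 1` of the graded
    -- Clebsch–Gordan matrix of the alternating sum of the exterior powers of `ρ`
    (B : Matrix (Fin (n + 1)) (Fin (n + 1)) ℂ)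
    (hB : ∀ i j, B i j =
      (Fintype.card G : ℂ)⁻¹ *
        ∑ k : Fin (n + 1), (classCard (g k) : ℂ) *
          (R i).character (g k) * (starRingEnd ℂ) ((R j).character (g k)) *
          Matrix.det ((1 : Matrix (Fin d) (Fin d) ℂ) - (ρ (g k) : Matrix (Fin d) (Fin d) ℂ))) :
    ∀ i : ℕ, i < d →
      (Matrix.of fun a b : Fin (n + 1) =>
          Polynomial.eval 1 ((⇑Polynomial.derivative)^[i] (D a b))) * B ^ (i + 1) = 0 := by
  intro i hi
  set δ : Fin (n + 1) → ℂ := fun k => (1 - (ρ (g k) : Matrix (Fin d) (Fin d) ℂ)).det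
  have hXY := charTable_mul_charTableInv g R hg hsimple hdist
  have hBδ : B = classMatrix g R δ := by
    ext a b
    rw [hB, classMatrix_apply]
    simp only [Algebra.algebraMap_self, RingHom.id_apply, Finset.mul_sum]
    rfl
  have hSmol : Matrix.of S = classMatrix g R fun k => (molienDetRat ρ (g k))⁻¹ := by
    ext a b
    rw [Matrix.of_apply, hS, classMatrix_apply, RatFunc.algebraMap_eq_C]
    simp only [div_eq_mul_inv]
  have hSB : Matrix.of S * (B ^ (i + 1)).map (algebraMap ℂ (RatFunc ℂ)) =
      classMatrix g R fun k =>
        (molienDetRat ρ (g k))⁻¹ * algebraMap ℂ (RatFunc ℂ) (δ k ^ (i + 1)) := by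
    rw [hSmol, hBδ, classMatrix_pow hXY, classMatrix_map_algebraMap, classMatrix_mul hXY]
    rfl
  ext a b
  rw [Matrix.of_eval_iterate_derivative_mul, Matrix.of_apply, Matrix.zero_apply]
  refine eval_iterate_derivative_eq_zero_of_pow_dvd <|
    pow_dvd_of_algebraMap_eq_mul_of_mem_regularAt
      (r := (Matrix.of S * (B ^ (i + 1)).map (algebraMap ℂ (RatFunc ℂ))) a b) ?_ ?_
      (X_sub_C_one_pow_dvd_prod_one_sub_X_pow nn hi)
  · rw [hSB]
    exact classMatrix_apply_mem g R (fun k => inv_molienDetRat_mul_mem_regularAt ρ (g k) i) a b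
  · simp only [Matrix.mul_apply, map_sum, Finset.mul_sum, map_mul, hD, RatFunc.algebraMap_C,
      RatFunc.algebraMap_eq_C, Matrix.map_apply, Matrix.of_apply, map_prod, map_sub, map_one,
      map_pow, RatFunc.algebraMap_X, mul_assoc]

theorem stmt9 {G : Type} [Group G] [Fintype G] {n : ℕ}
    (g : Fin (n + 1) → G) (hg1 : g 0 = 1)
    (hg : ∀ x : G, ∃! k : Fin (n + 1), IsConj (g k) x)
    (R : Fin (n + 1) → FDRep ℂ G)
    (hsimple : ∀ i, Simple (R i))
    (htriv : ∀ x : G, (R 0).character x = 1)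
    (hdist : ∀ i j, i ≠ j → ¬ Nonempty (R i ≅ R j))
    {d : ℕ} (hd : 1 ≤ d) (ρ : G →* Matrix.GeneralLinearGroup (Fin d) ℂ)
    -- `S` : the Molien matrix of `ρ` over `ℂ(q)`
    (S : Fin (n + 1) → Fin (n + 1) → RatFunc ℂ)
    (hS : ∀ i j, S i j =
      RatFunc.C ((Fintype.card G : ℂ)⁻¹) *
        ∑ k : Fin (n + 1), (classCard (g k) : RatFunc ℂ) *
          RatFunc.C ((R i).character (g k)) *
          RatFunc.C ((starRingEnd ℂ) ((R j).character (g k))) / molienDetRat ρ (g k))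
    (nn : Fin d → ℕ) (hnn : ∀ t, 0 < nn t)
    -- every entry of `D(q) = (Π_t (1 − q^{n_t})) · S(q)` is a polynomial
    (D : Matrix (Fin (n + 1)) (Fin (n + 1)) (Polynomial ℂ))
    (hD : ∀ i j, algebraMap (Polynomial ℂ) (RatFunc ℂ) (D i j) =
      (∏ t : Fin d, ((1 : RatFunc ℂ) - RatFunc.X ^ nn t)) * S i j)
    -- `B` : the affine Cartan-type matrix, the value at `q = 1` of the graded
    -- Clebsch–Gordan matrix of the alternating sum of the exterior powers of `ρ`
    (B : Matrix (Fin (n + 1)) (Fin (n + 1)) ℂ)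
    (hB : ∀ i j, B i j =
      (Fintype.card G : ℂ)⁻¹ *
        ∑ k : Fin (n + 1), (classCard (g k) : ℂ) *
          (R i).character (g k) * (starRingEnd ℂ) ((R j).character (g k)) *
          Matrix.det ((1 : Matrix (Fin d) (Fin d) ℂ) - (ρ (g k) : Matrix (Fin d) (Fin d) ℂ))) :
    ∀ i : ℕ, i < d →
      (Matrix.of fun a b : Fin (n + 1) =>
          Polynomial.eval 1 ((⇑Polynomial.derivative)^[i] (D a b))) * B ^ (i + 1) = 0 :=
  stmt9_general g hg R hsimple hdist ρ S hS nn D hD B hB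
end
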